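/- In the electricity pool model (P2), let E₀ = 2·max_{1 ≤ k ≤ T} |Σ_{t=1}^k (d̄ − d_t)|. For every E ≥ E₀, the control u_t = d̄ − d_t is feasible, it is optimal, and C*(E) = T·C(d̄); consequently the unique optimal generation profile satisfies g*_t(E) = d̄ for all t. -/

import Mathlib

open Finset Filter

/-- Feasibility for the electricity pool model (P2) at storage capacity `E`:
the states of charge `x_k = E/2 + ∑_{t ≤ k} u t` (with `x_0 = E/2`) satisfy
`0 ≤ x_k ≤ E` for all `k`, and the terminal condition `x_T = E/2` holds. -/
def poolFeasible (T : ℕ) (E : ℝ) (u : Fin T → ℝ) : Prop :=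
  (∀ k : Fin T, 0 ≤ E / 2 + ∑ t ∈ Finset.Iic k, u t) ∧
  (∀ k : Fin T, E / 2 + ∑ t ∈ Finset.Iic k, u t ≤ E) ∧
  E / 2 + ∑ t, u t = E / 2

/-- Total generation cost `∑ t C (d t + u t)` with `C g = (1/2)·a·g² + b·g + c`. -/
noncomputable def poolCost (T : ℕ) (a b c : ℝ) (d u : Fin T → ℝ) : ℝ :=
  ∑ t, ((1 / 2) * a * (d t + u t) ^ 2 + b * (d t + u t) + c)

/-- Optimal cost `C*(E)` of the pool model (P2). -/
noncomputable def poolCstar (T : ℕ) (a b c : ℝ) (d : Fin T → ℝ) (E : ℝ) : ℝ :=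
  sInf {y : ℝ | ∃ u : Fin T → ℝ, poolFeasible T E u ∧ y = poolCost T a b c d u}

/-!
Every feasible control returns the storage to its initial level, so `∑ t, u t = 0` and the
generation profile `g = d + u` always has mean `d̄`. Expanding the quadratic cost around `d̄`
gives `∑ t, C (g t) = T · C d̄ + (a / 2) · ∑ t, (g t - d̄) ^ 2`, so `T · C d̄` is a lower
bound, attained exactly by the flat profile `g ≡ d̄`. The flat control `u t = d̄ - d t` keeps
every state of charge within `E / 2` of the initial level `E / 2` once `E ≥ E₀`, so it is
feasible.
-/

theorem Finset.sum_quadratic_eq_card_mul_at_mean_add_sum_sq {ι : Type*} (s : Finset ι)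
    (a b c : ℝ) (g : ι → ℝ) :
    ∑ t ∈ s, ((1 / 2) * a * g t ^ 2 + b * g t + c) =
      #s * ((1 / 2) * a * ((∑ t ∈ s, g t) / #s) ^ 2 + b * ((∑ t ∈ s, g t) / #s) + c)
        + (1 / 2) * a * ∑ t ∈ s, (g t - (∑ t ∈ s, g t) / #s) ^ 2 := by
  set m := (∑ t ∈ s, g t) / #s
  have hdev : ∑ t ∈ s, (g t - m) = 0 := by
    rcases s.eq_empty_or_nonempty with rfl | hs
    · simp
    · rw [sum_sub_distrib, sum_const, nsmul_eq_mul,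
        mul_div_cancel₀ _ (Nat.cast_ne_zero.2 (card_ne_zero.2 hs)), sub_self]
  have hexpand : ∀ t ∈ s, (1 / 2) * a * g t ^ 2 + b * g t + c =
      ((1 / 2) * a * m ^ 2 + b * m + c) + (1 / 2) * a * (g t - m) ^ 2
        + (a * m + b) * (g t - m) := fun t _ => by ring
  rw [sum_congr rfl hexpand, sum_add_distrib, sum_add_distrib, ← mul_sum, ← mul_sum, hdev,
    mul_zero, add_zero, sum_const, nsmul_eq_mul]

section Pool

variable {T : ℕ} {a b c E : ℝ} {d u : Fin T → ℝ}

theorem poolFeasible.sum_eq_zero (hu : poolFeasible T E u) : ∑ t, u t = 0 := by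
  linarith [hu.2.2]

theorem poolFeasible_of_abs_sum_Iic_le (hsum : ∑ t, u t = 0)
    (hbound : ∀ k, |∑ t ∈ Iic k, u t| ≤ E / 2) : poolFeasible T E u :=
  ⟨fun k => by linarith [(abs_le.mp (hbound k)).1],
    fun k => by linarith [(abs_le.mp (hbound k)).2], by rw [hsum, add_zero]⟩

theorem poolCost_eq_add_sum_sq (hu : ∑ t, u t = 0) :
    poolCost T a b c d u =
      T * ((1 / 2) * a * ((∑ s, d s) / T) ^ 2 + b * ((∑ s, d s) / T) + c)
        + (1 / 2) * a * ∑ t, (d t + u t - (∑ s, d s) / T) ^ 2 := by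
  have hmean : ∑ t, (d t + u t) = ∑ s, d s := by rw [sum_add_distrib, hu, add_zero]
  unfold poolCost
  simpa only [hmean, card_univ, Fintype.card_fin] using
    univ.sum_quadratic_eq_card_mul_at_mean_add_sum_sq a b c (fun t => d t + u t)

theorem poolCost_ge (ha : 0 ≤ a) (hu : ∑ t, u t = 0) :
    T * ((1 / 2) * a * ((∑ s, d s) / T) ^ 2 + b * ((∑ s, d s) / T) + c)
      ≤ poolCost T a b c d u := by
  rw [poolCost_eq_add_sum_sq hu]
  have : 0 ≤ ∑ t, (d t + u t - (∑ s, d s) / T) ^ 2 := sum_nonneg fun t _ => sq_nonneg _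
  nlinarith

theorem poolCost_eq_iff (ha : 0 < a) (hu : ∑ t, u t = 0) :
    poolCost T a b c d u =
        T * ((1 / 2) * a * ((∑ s, d s) / T) ^ 2 + b * ((∑ s, d s) / T) + c) ↔
      ∀ t, d t + u t = (∑ s, d s) / T := by
  rw [poolCost_eq_add_sum_sq hu, add_eq_left, mul_eq_zero, or_iff_right (by positivity),
    sum_eq_zero_iff_of_nonneg fun t _ => sq_nonneg _]
  simp only [mem_univ, true_implies, sq_eq_zero_iff, sub_eq_zero]

theorem poolCstar_eq_of_forall_le (hu : poolFeasible T E u)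
    (hmin : ∀ v, poolFeasible T E v → poolCost T a b c d u ≤ poolCost T a b c d v) :
    poolCstar T a b c d E = poolCost T a b c d u :=
  IsLeast.csInf_eq ⟨⟨u, hu, rfl⟩, by rintro _ ⟨v, hv, rfl⟩; exact hmin v hv⟩

end Pool

/-- In the pool model (P2), let
`E₀ = 2·max_{1 ≤ k ≤ T} |∑_{t=1}^k (d̄ − d t)|`. For every `E ≥ E₀`, the control
`u t = d̄ − d t` is feasible and optimal, `C*(E) = T·C(d̄)`, and the unique
optimal generation profile satisfies `g*_t(E) = d̄` for all `t`. Here `gstar`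
is any selection of optimal generation profiles. -/
theorem pool_flat_optimum_for_large_capacity
    (T : ℕ) (hT : 1 ≤ T) (a b c : ℝ) (ha : 0 < a) (d : Fin T → ℝ)
    (gstar : ℝ → Fin T → ℝ)
    (hgstar : ∀ E : ℝ, 0 ≤ E → ∃ u : Fin T → ℝ, poolFeasible T E u ∧
      (∀ t, gstar E t = d t + u t) ∧
      poolCost T a b c d u = poolCstar T a b c d E) :
    ∀ E : ℝ,
      2 * Finset.univ.sup' ⟨⟨0, hT⟩, Finset.mem_univ _⟩
          (fun k : Fin T => |∑ t ∈ Finset.Iic k, ((∑ s, d s) / (T : ℝ) - d t)|) ≤ E →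
      poolFeasible T E (fun t => (∑ s, d s) / (T : ℝ) - d t) ∧
      poolCost T a b c d (fun t => (∑ s, d s) / (T : ℝ) - d t)
        = poolCstar T a b c d E ∧
      poolCstar T a b c d E =
        (T : ℝ) * ((1 / 2) * a * ((∑ s, d s) / (T : ℝ)) ^ 2
          + b * ((∑ s, d s) / (T : ℝ)) + c) ∧
      (∀ t, gstar E t = (∑ s, d s) / (T : ℝ)) := by
  intro E hE
  set flat : Fin T → ℝ := fun t => (∑ s, d s) / T - d t
  have hsum : ∑ t, flat t = 0 := by
    rw [sum_sub_distrib, sum_const, card_univ, Fintype.card_fin, nsmul_eq_mul,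
      mul_div_cancel₀ _ (by positivity), sub_self]
  have hfeas : poolFeasible T E flat := poolFeasible_of_abs_sum_Iic_le hsum fun k => by
    linarith [le_sup' (fun k : Fin T => |∑ t ∈ Iic k, flat t|) (mem_univ k)]
  have hcost := (poolCost_eq_iff (b := b) (c := c) ha hsum).mpr fun t => add_sub_cancel _ _
  have hCstar : poolCstar T a b c d E = poolCost T a b c d flat :=
    poolCstar_eq_of_forall_le hfeas fun v hv => hcost ▸ poolCost_ge ha.le hv.sum_eq_zero
  refine ⟨hfeas, hCstar.symm, hCstar.trans hcost, fun t => ?_⟩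
  obtain ⟨u, hu, hgu, hucost⟩ := hgstar E ((hfeas.1 ⟨0, hT⟩).trans (hfeas.2.1 ⟨0, hT⟩))
  rw [hgu, (poolCost_eq_iff ha hu.sum_eq_zero).mp (hucost.trans (hCstar.trans hcost)) t]
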